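/- Fix α ∈ (0,1) and let k = ⌊αn⌋. For i.i.d. shifted exponential random variables with parameters (λ,c), the average of the first k order statistic means, (1/k)Σ_{i=1}^{k} E[X_{i:n}] = c + H_n/λ - (1/(kλ))Σ_{i=1}^{k} H_{n-i}, converges as n → ∞ to c + 1/λ + ((1-α)/(αλ)) log(1-α). -/

import Mathlib

/-- The `m`-th harmonic number. -/
noncomputable def H (m : ℕ) : ℝ := ∑ j ∈ Finset.Icc 1 m, (1 : ℝ) / j

open Filter Topology Finset

/-! Since `∑_{m<M} H m = M H M - M`, the sum `∑_{i=1}^k H (n - i)` telescopes and the average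
equals `1 + ((n - k)/k) (H (n - k) - H n)`. As `H m - log m → γ`, the difference of harmonic
numbers behaves like `log ((n - k)/n) → log (1 - α)`, while `(n - k)/k → (1 - α)/α`. -/

lemma H_eq_harmonic (m : ℕ) : H m = harmonic m := by
  simp [H, harmonic_eq_sum_Icc]

lemma H_succ (m : ℕ) : H (m + 1) = H m + 1 / (m + 1) := by
  simp only [H_eq_harmonic, harmonic_succ]
  push_cast
  ring

lemma sum_Icc_H_sub (n k : ℕ) (hk : k ≤ n) :
    ∑ i ∈ Icc 1 k, H (n - i) = n * H n - n - ((n - k : ℕ) * H (n - k) - (n - k : ℕ)) := by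
  induction k with
  | zero => simp
  | succ k ih =>
    have hm : n - k = n - (k + 1) + 1 := by omega
    rw [sum_Icc_succ_top (by omega), ih (by omega), hm, H_succ]
    push_cast
    field_simp
    ring

lemma H_sub_average_sum_H (n k : ℕ) (hk0 : k ≠ 0) (hkn : k ≤ n) :
    H n - 1 / k * ∑ i ∈ Icc 1 k, H (n - i) = 1 + (n - k : ℕ) / k * (H (n - k) - H n) := by
  rw [sum_Icc_H_sub n k hkn, Nat.cast_sub hkn]
  field_simp
  ring

lemma tendsto_H_sub_H {ι : Type*} {L : Filter ι} {u v : ι → ℕ} {r : ℝ}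
    (hv : Tendsto v L atTop) (hr : 0 < r) (huv : Tendsto (fun i ↦ (u i : ℝ) / v i) L (𝓝 r)) :
    Tendsto (fun i ↦ H (u i) - H (v i)) L (𝓝 (Real.log r)) := by
  have hu : Tendsto u L atTop := by
    rw [← tendsto_natCast_atTop_iff (R := ℝ)] at hv ⊢
    refine (huv.pos_mul_atTop hr hv).congr' ?_
    filter_upwards [hv.eventually_ne_atTop 0] with i hvi
    exact div_mul_cancel₀ _ hvi
  have hγ : Tendsto (fun n : ℕ ↦ H n - Real.log n) atTop (𝓝 Real.eulerMascheroniConstant) := by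
    simpa [H_eq_harmonic] using Real.tendsto_harmonic_sub_log
  have hlog := (Real.continuousAt_log hr.ne').tendsto.comp huv
  have key := ((hγ.comp hu).sub (hγ.comp hv)).add hlog
  rw [sub_self, zero_add] at key
  refine key.congr' ?_
  filter_upwards [hu.eventually_ne_atTop 0, hv.eventually_ne_atTop 0] with i hui hvi
  simp only [Function.comp_apply]
  rw [Real.log_div (by exact_mod_cast hui) (by exact_mod_cast hvi)]
  ring

lemma tendsto_H_sub_average_sum_H {k : ℕ → ℕ} {α : ℝ} (h0 : 0 < α) (h1 : α < 1)
    (hk : Tendsto (fun n ↦ (k n : ℝ) / n) atTop (𝓝 α)) :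
    Tendsto (fun n ↦ H n - 1 / k n * ∑ i ∈ Icc 1 (k n), H (n - i)) atTop
      (𝓝 (1 + (1 - α) / α * Real.log (1 - α))) := by
  have hk_mem : ∀ᶠ n in atTop, 0 < k n ∧ k n ≤ n := by
    filter_upwards [hk.eventually (Ioo_mem_nhds h0 h1)] with n ⟨hpos, hlt⟩
    have hn : (0 : ℝ) < n := by
      by_contra! hn
      simp [le_antisymm hn n.cast_nonneg] at hpos
    refine ⟨Nat.pos_of_ne_zero (by rintro h; simp [h] at hpos), ?_⟩
    exact_mod_cast ((div_lt_one hn).1 hlt).le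
  have hrest : Tendsto (fun n ↦ ((n - k n : ℕ) : ℝ) / n) atTop (𝓝 (1 - α)) := by
    refine (tendsto_const_nhds.sub hk).congr' ?_
    filter_upwards [hk_mem] with n ⟨hk0, hkn⟩
    have hn : (n : ℝ) ≠ 0 := by exact_mod_cast (hk0.trans_le hkn).ne'
    rw [Nat.cast_sub hkn]
    field_simp
  have hratio : Tendsto (fun n ↦ ((n - k n : ℕ) : ℝ) / k n) atTop (𝓝 ((1 - α) / α)) := by
    refine (hrest.div hk h0.ne').congr' ?_
    filter_upwards [hk_mem] with n ⟨hk0, hkn⟩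
    have hn : (n : ℝ) ≠ 0 := by exact_mod_cast (hk0.trans_le hkn).ne'
    have hk0' : (k n : ℝ) ≠ 0 := by exact_mod_cast hk0.ne'
    rw [Pi.div_apply]
    field_simp
  have hdiff := tendsto_H_sub_H tendsto_id (sub_pos.2 h1) hrest
  refine (tendsto_const_nhds.add (hratio.mul hdiff)).congr' ?_
  filter_upwards [hk_mem] with n ⟨hk0, hkn⟩
  exact (H_sub_average_sum_H n (k n) hk0.ne' hkn).symm

theorem average_order_stat_mean_tendsto_general (α c l : ℝ) (h0 : 0 < α) (h1 : α < 1) :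
    Filter.Tendsto
      (fun n : ℕ =>
        c + H n / l - (1 / ((⌊α * n⌋₊ : ℝ) * l)) * ∑ i ∈ Finset.Icc 1 ⌊α * n⌋₊, H (n - i))
      Filter.atTop
      (nhds (c + 1 / l + ((1 - α) / (α * l)) * Real.log (1 - α))) := by
  have hk : Tendsto (fun n : ℕ ↦ (⌊α * n⌋₊ : ℝ) / n) atTop (𝓝 α) :=
    (tendsto_nat_floor_mul_div_atTop h0.le).comp tendsto_natCast_atTop_atTop
  convert ((tendsto_H_sub_average_sum_H h0 h1 hk).div_const l).const_add c using 2
  · ring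
  · ring

/-- For fixed `α ∈ (0,1)`, `k = ⌊αn⌋` and shifted exponential link delays with
rate `l > 0` and shift `c` (so that `E[X_{i:n}] = c + (H_n - H_{n-i})/l`), the
average of the first `k` order statistic means,
`(1/k) Σ_{i=1}^k E[X_{i:n}] = c + H_n/l - (1/(k l)) Σ_{i=1}^k H_{n-i}`,
converges to `c + 1/l + ((1-α)/(α l)) log(1-α)` as `n → ∞`. -/
theorem average_order_stat_mean_tendsto (α c l : ℝ) (h0 : 0 < α) (h1 : α < 1)
    (hl : 0 < l) :
    Filter.Tendsto
      (fun n : ℕ =>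
        c + H n / l - (1 / ((⌊α * n⌋₊ : ℝ) * l)) * ∑ i ∈ Finset.Icc 1 ⌊α * n⌋₊, H (n - i))
      Filter.atTop
      (nhds (c + 1 / l + ((1 - α) / (α * l)) * Real.log (1 - α))) :=
  average_order_stat_mean_tendsto_general α c l h0 h1
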